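/- arXiv:math/0203114 — 2 statements merged into one kernel-verified Lean document; each statement's English description precedes it below -/
import Mathlib

section
/- Let f_i = c_i t^{a_i}, 0 ≤ i ≤ n, be n+1 monomials in n variables over the field k, and let π be any permutation of the index set {0,1,…,n}. Then [f_{π(0)}, f_{π(1)}, …, f_{π(n)}] = [f_0, f_1, …, f_n]^{sgn(π)}, where sgn(π) ∈ {1,−1} is the sign of the permutation π; that is, the symbol is multiplicatively skew-symmetric under arbitrary permutations of the monomials. -/
/-! The exponent of `cᵢ` is the signed maximal minor `(-1)^i Aᵢ`, which is the determinant of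
the square matrix `[eᵢ | A]`; permuting its rows gives `(-1)^i (Aπ)ᵢ = sgn π · (-1)^{π i} A_{π i}`.
For the sign only `B(A) mod 2` matters. Modulo 2 the term `a_{ik} a_{jk} A^k_{ij}` depends only on
the unordered pair `{i, j}`, since reordering the remaining rows changes `A^k_{ij}` by a sign, so
`B(A) mod 2` is a sum over `Sym2` which a permutation of the rows merely reindexes. -/

open Matrix

/-- The strictly increasing embedding `Fin m → Fin (m + 2)` that skips the values
of `i` and `j` (for `i < j`): used to delete rows `i` and `j` of a matrix. -/
def skip2 {m : ℕ} (i j : Fin (m + 2)) (r : Fin m) : Fin (m + 2) :=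
  if r.val < i.val then ⟨r.val, by have := r.isLt; omega⟩
  else if r.val + 1 < j.val then ⟨r.val + 1, by have := r.isLt; omega⟩
  else ⟨r.val + 2, by have := r.isLt; omega⟩

/-- `B(A) = Σ_k Σ_{i<j} a_{ik} a_{jk} A^k_{ij}`, where `A^k_{ij}` is the determinant of
the matrix obtained from `A` by deleting rows `i`, `j` and column `k`. -/
def Bcoef {m : ℕ} (A : Matrix (Fin (m + 2)) (Fin (m + 1)) ℤ) : ℤ :=
  ∑ c : Fin (m + 1), ∑ i : Fin (m + 2), ∑ j : Fin (m + 2),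
    if i < j then A i c * A j c * (A.submatrix (skip2 i j) c.succAbove).det else 0

/-- The symbol `[c₀ t^{a₀}, …, c_{n} t^{a_n}] = (-1)^{B(A)} ∏ᵢ cᵢ^{(-1)ⁱ Aᵢ}` of `n + 1`
monomials in `n` variables (here `n = m + 1`), where `Aᵢ` is the determinant of the matrix
obtained from the exponent matrix `A` by deleting its `i`-th row. -/
def monomialSymbol {k : Type*} [Field k] {m : ℕ}
    (c : Fin (m + 2) → kˣ) (A : Matrix (Fin (m + 2)) (Fin (m + 1)) ℤ) : kˣ :=
  (-1) ^ Bcoef A *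
    ∏ i : Fin (m + 2), c i ^ ((-1 : ℤ) ^ (i : ℕ) * (A.submatrix i.succAbove id).det)

section SkipTwo

variable {m : ℕ} {i j : Fin (m + 2)}

lemma strictMono_skip2 : StrictMono (skip2 i j) := by
  intro a b hab
  simp only [skip2, Fin.lt_def] at hab ⊢
  split_ifs <;> simp only at * <;> omega

lemma range_skip2 (h : i < j) : Set.range (skip2 i j) = {i, j}ᶜ := by
  ext x
  simp only [Set.mem_range, Set.mem_compl_iff, Set.mem_insert_iff, Set.mem_singleton_iff,
    not_or, Fin.ext_iff, Fin.lt_def] at h ⊢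
  constructor
  · rintro ⟨r, hr⟩
    rw [← hr]
    simp only [skip2]
    split_ifs <;> simp only <;> omega
  · rintro ⟨hi, hj⟩
    have hx := x.isLt
    by_cases h1 : x.val < i.val
    · exact ⟨⟨x.val, by omega⟩, by simp only [skip2]; split_ifs; simp only⟩
    by_cases h2 : x.val < j.val
    · exact ⟨⟨x.val - 1, by omega⟩, by simp only [skip2]; split_ifs <;> simp only <;> omega⟩
    · exact ⟨⟨x.val - 2, by omega⟩, by simp only [skip2]; split_ifs <;> simp only <;> omega⟩

end SkipTwo

lemma exists_perm_comp_eq_of_range_eq {ι : Type*} {m : ℕ} {f g : Fin m → ι}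
    (hf : Function.Injective f) (hg : Function.Injective g) (h : Set.range f = Set.range g) :
    ∃ σ : Equiv.Perm (Fin m), f = g ∘ σ := by
  refine ⟨(Equiv.ofInjective f hf).trans
    ((Equiv.setCongr h).trans (Equiv.ofInjective g hg).symm), funext fun r => ?_⟩
  simp [Equiv.apply_ofInjective_symm hg]

lemma Int.units_mul_modEq_two (u : ℤˣ) (x : ℤ) : u * x ≡ x [ZMOD 2] := by
  rcases Int.units_eq_one_or u with rfl | rfl
  · simp [Int.ModEq]
  · simp [Int.ModEq, Int.neg_emod_two]

lemma det_submatrix_modEq_two_of_range_eq {ι κ : Type*} {m : ℕ} (A : Matrix ι κ ℤ)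
    {f g : Fin m → ι} (hf : Function.Injective f) (hg : Function.Injective g)
    (h : Set.range f = Set.range g) (e : Fin m → κ) :
    (A.submatrix f e).det ≡ (A.submatrix g e).det [ZMOD 2] := by
  obtain ⟨σ, rfl⟩ := exists_perm_comp_eq_of_range_eq hf hg h
  change ((A.submatrix g e).submatrix σ id).det ≡ _ [ZMOD 2]
  rw [Matrix.det_permute]
  exact Int.units_mul_modEq_two _ _

section PairSums

variable {ι M : Type*} [Fintype ι] [LinearOrder ι] [AddCommMonoid M]

lemma sum_sum_ite_lt_eq_sum_sym2 (g : ι → ι → M) (hg : ∀ x y, g x y = g y x) :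
    ∑ i, ∑ j, (if i < j then g i j else 0) =
      ∑ z : Sym2 ι with ¬ z.IsDiag, Sym2.lift ⟨g, hg⟩ z := by
  rw [← Finset.sym2_univ, Finset.sum_sym2_filter_not_isDiag, ← Finset.sum_product',
    ← Finset.sum_filter]
  refine Finset.sum_congr ?_ fun _ _ => rfl
  ext ⟨x, y⟩
  simp only [Finset.mem_filter, Finset.mem_product, Finset.mem_offDiag, Finset.mem_univ]
  exact ⟨fun h => ⟨⟨trivial, trivial, h.2.ne⟩, h.2⟩, fun h => ⟨⟨trivial, trivial⟩, h.2⟩⟩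

lemma sum_sum_ite_lt_comp_perm (g : ι → ι → M) (hg : ∀ x y, g x y = g y x)
    (π : Equiv.Perm ι) :
    ∑ i, ∑ j, (if i < j then g (π i) (π j) else 0) = ∑ i, ∑ j, if i < j then g i j else 0 := by
  rw [sum_sum_ite_lt_eq_sum_sym2 g hg, sum_sum_ite_lt_eq_sum_sym2 _ fun x y => hg (π x) (π y)]
  refine Finset.sum_nbij' (Sym2.map π) (Sym2.map π.symm) ?_ ?_ ?_ ?_ ?_
  · simp [Sym2.isDiag_map π.injective]
  · simp [Sym2.isDiag_map π.symm.injective]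
  · simp [Sym2.map_map]
  · simp [Sym2.map_map]
  · rintro ⟨x, y⟩ -
    rfl

end PairSums

lemma range_perm_comp_skip2 {m : ℕ} (π : Equiv.Perm (Fin (m + 2))) {i j : Fin (m + 2)}
    (h : i < j) :
    Set.range (π ∘ skip2 i j) = Set.range (skip2 (min (π i) (π j)) (max (π i) (π j))) := by
  rw [Set.range_comp, range_skip2 h, range_skip2 (min_lt_max.2 (π.injective.ne h.ne)),
    Set.image_compl_eq π.bijective, Set.image_pair]
  rcases le_total (π i) (π j) with hle | hle
  · rw [min_eq_left hle, max_eq_right hle]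
  · rw [min_eq_right hle, max_eq_left hle, Set.pair_comm]

lemma bcoef_submatrix_perm_modEq {m : ℕ} (A : Matrix (Fin (m + 2)) (Fin (m + 1)) ℤ)
    (π : Equiv.Perm (Fin (m + 2))) : Bcoef (A.submatrix π id) ≡ Bcoef A [ZMOD 2] := by
  let G : Fin (m + 1) → Fin (m + 2) → Fin (m + 2) → ℤ := fun c x y =>
    A x c * A y c * (A.submatrix (skip2 (min x y) (max x y)) c.succAbove).det
  have hG : ∀ c x y, G c x y = G c y x := by
    intro c x y
    simp only [G, min_comm, max_comm, mul_comm (A x c)]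
  have hA : Bcoef A = ∑ c, ∑ i, ∑ j, if i < j then G c i j else 0 := by
    refine Finset.sum_congr rfl fun c _ => Finset.sum_congr rfl fun i _ =>
      Finset.sum_congr rfl fun j _ => ?_
    split_ifs with h
    · simp only [G, min_eq_left h.le, max_eq_right h.le]
    · rfl
  have hAπ : Bcoef (A.submatrix π id) ≡
      ∑ c, ∑ i, ∑ j, (if i < j then G c (π i) (π j) else 0) [ZMOD 2] := by
    refine Int.ModEq.sum fun c _ => Int.ModEq.sum fun i _ => Int.ModEq.sum fun j _ => ?_
    split_ifs with h
    · refine Int.ModEq.mul_left _ (det_submatrix_modEq_two_of_range_eq A ?_ ?_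
        (range_perm_comp_skip2 π h) c.succAbove)
      · exact π.injective.comp strictMono_skip2.injective
      · exact strictMono_skip2.injective
    · rfl
  rw [hA]
  simpa only [sum_sum_ite_lt_comp_perm _ (hG _) π] using hAπ

section SignedMinor

variable {R : Type*} [CommRing R] {n : ℕ} (A : Matrix (Fin (n + 1)) (Fin n) R)

def signedMinor (i : Fin (n + 1)) : R :=
  (-1) ^ (i : ℕ) * (A.submatrix i.succAbove id).det

lemma signedMinor_eq_det_cons (i : Fin (n + 1)) :
    signedMinor A i = (Matrix.of fun r =>
      (Fin.cons ((Pi.single i (1 : R) : Fin (n + 1) → R) r) (A r) : Fin (n + 1) → R)).det := by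
  rw [Matrix.det_succ_column_zero, Finset.sum_eq_single i]
  · simp [signedMinor, Matrix.submatrix]
  · intro b _ hb
    simp [hb]
  · simp

lemma signedMinor_submatrix_perm (π : Equiv.Perm (Fin (n + 1))) (i : Fin (n + 1)) :
    signedMinor (A.submatrix π id) i = Equiv.Perm.sign π * signedMinor A (π i) := by
  rw [signedMinor_eq_det_cons, signedMinor_eq_det_cons, ← Matrix.det_permute]
  congr 1
  ext r s
  refine Fin.cases ?_ (fun _ => rfl) s
  simp [Pi.single_apply, π.injective.eq_iff]

end SignedMinor

lemma monomialSymbol_eq {k : Type*} [Field k] {m : ℕ} (c : Fin (m + 2) → kˣ)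
    (A : Matrix (Fin (m + 2)) (Fin (m + 1)) ℤ) :
    monomialSymbol c A = (-1) ^ Bcoef A * ∏ i, c i ^ signedMinor A i :=
  rfl

/-- Multiplicative skew-symmetry of the symbol of monomials under an arbitrary
permutation `π` of the index set: `[f_{π(0)},…,f_{π(n)}] = [f₀,…,fₙ]^{sgn π}`. -/
theorem monomialSymbol_perm {k : Type*} [Field k] {m : ℕ}
    (c : Fin (m + 2) → kˣ) (A : Matrix (Fin (m + 2)) (Fin (m + 1)) ℤ)
    (π : Equiv.Perm (Fin (m + 2))) :
    monomialSymbol (c ∘ π) (A.submatrix π id) =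
      monomialSymbol c A ^ ((Equiv.Perm.sign π : ℤˣ) : ℤ) := by
  set s : ℤ := ((Equiv.Perm.sign π : ℤˣ) : ℤ)
  have hB : Bcoef (A.submatrix π id) ≡ Bcoef A * s [ZMOD 2] :=
    (bcoef_submatrix_perm_modEq A π).trans
      (by rw [mul_comm]; exact (Int.units_mul_modEq_two _ _).symm)
  have hsign : (-1 : kˣ) ^ Bcoef (A.submatrix π id) = ((-1) ^ Bcoef A) ^ s := by
    rw [← _root_.zpow_mul]
    refine zpow_eq_zpow_iff_modEq.2 (hB.of_dvd ?_)
    exact Int.natCast_dvd_natCast.2 (orderOf_dvd_of_pow_eq_one neg_one_sq)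
  have hprod : ∏ i, (c ∘ π) i ^ signedMinor (A.submatrix π id) i =
      (∏ i, c i ^ signedMinor A i) ^ s := by
    simp only [signedMinor_submatrix_perm, Int.cast_id, Function.comp_apply, _root_.zpow_mul']
    rw [← Finset.prod_zpow]
    exact Equiv.prod_comp π fun j => (c j ^ signedMinor A j) ^ s
  rw [monomialSymbol_eq, monomialSymbol_eq, mul_zpow, hsign, hprod]
end

section
/- Let A be an (n+1)×n integer matrix with rows a_0,…,a_n ∈ ℤ^n, let Ā denote its reduction modulo 2 with rows ā_0,…,ā_n ∈ 𝔽_2^n, and suppose Ā has rank n over 𝔽_2 = ℤ/2ℤ. Then for any nonzero vector λ = (λ_0,…,λ_n) ∈ 𝔽_2^{n+1} satisfying the relation λ_0 ā_0 + ⋯ + λ_n ā_n = 0, one has B(A) ≡ λ_0 + λ_1 + ⋯ + λ_n + 1 (mod 2). -/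
open Matrix

section Aux
variable {m : ℕ}

lemma skip2_val {i j : Fin (m+2)} (r : Fin m) :
    (skip2 i j r).val = if r.val < i.val then r.val
      else if r.val + 1 < j.val then r.val + 1 else r.val + 2 := by
  unfold skip2; split_ifs <;> rfl

lemma skip2_injective {i j : Fin (m+2)} (hij : i < j) : Function.Injective (skip2 i j) := by
  intro a b hab
  have := congrArg Fin.val hab
  rw [skip2_val, skip2_val] at this
  apply Fin.ext
  have hij' : i.val < j.val := hij
  split_ifs at this <;> omega

lemma skip2_mem_range {i j : Fin (m+2)} (hij : i < j) (y : Fin (m+2)) :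
    (∃ r, skip2 i j r = y) ↔ (y ≠ i ∧ y ≠ j) := by
  have hij' : i.val < j.val := hij
  constructor
  · rintro ⟨r, rfl⟩
    constructor <;> intro hy <;> have := congrArg Fin.val hy <;>
      rw [skip2_val] at this <;> split_ifs at this <;> omega
  · rintro ⟨h1, h2⟩
    have h1' : y.val ≠ i.val := fun h => h1 (Fin.ext h)
    have h2' : y.val ≠ j.val := fun h => h2 (Fin.ext h)
    have hy := y.isLt
    refine ⟨⟨if y.val < i.val then y.val else if y.val < j.val then y.val - 1 else y.val - 2,
      by split_ifs <;> omega⟩, ?_⟩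
    apply Fin.ext
    rw [skip2_val]
    simp only
    split_ifs <;> omega

end Aux

abbrev F2 := ZMod 2

lemma F2.add_self (x : F2) : x + x = 0 := by revert x; decide
lemma F2.mul_self (x : F2) : x * x = x := by revert x; decide
lemma F2.neg_one : (-1 : F2) = 1 := by decide

lemma det_rows_congr {k K J : ℕ} (N : Matrix (Fin K) (Fin J) F2)
    (e₁ e₂ : Fin k → Fin K) (h₁ : Function.Injective e₁) (h₂ : Function.Injective e₂)
    (hr : Set.range e₁ = Set.range e₂) (c : Fin k → Fin J) :
    (N.submatrix e₁ c).det = (N.submatrix e₂ c).det := by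
  have hmem : ∀ x, ∃ y, e₂ y = e₁ x := by
    intro x
    have : e₁ x ∈ Set.range e₂ := hr ▸ Set.mem_range_self x
    exact this
  choose f hf using hmem
  have hmem' : ∀ x, ∃ y, e₁ y = e₂ x := by
    intro x
    have : e₂ x ∈ Set.range e₁ := hr ▸ Set.mem_range_self x
    exact this
  choose g hg using hmem'
  have hgf : ∀ x, g (f x) = x := fun x => h₁ (by rw [hg, hf])
  have hfg : ∀ x, f (g x) = x := fun x => h₂ (by rw [hf, hg])
  let σ : Equiv.Perm (Fin k) := ⟨f, g, hgf, hfg⟩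
  have hsub : N.submatrix e₁ c = (N.submatrix e₂ c).submatrix σ id := by
    ext x y
    simp only [submatrix_apply, id_eq]
    show N (e₁ x) (c y) = N (e₂ (f x)) (c y)
    rw [hf]
  rw [hsub, det_permute]
  rcases Int.units_eq_one_or (Equiv.Perm.sign σ) with h | h <;> rw [h] <;>
    simp [F2.neg_one]

section Split
variable {k K J : ℕ} (N : Matrix (Fin K) (Fin J) F2) (r s : Fin K)

/-- The matrix obtained from `N` by adding row `r` to row `s`. -/
def addRow (N : Matrix (Fin K) (Fin J) F2) (r s : Fin K) : Matrix (Fin K) (Fin J) F2 :=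
  Matrix.of fun p kk => if p = s then N s kk + N r kk else N p kk

lemma det_addRow_split (e : Fin k → Fin K) (he : Function.Injective e)
    (c : Fin k → Fin J) (q₀ : Fin k) (hq : e q₀ = s) :
    ((addRow N r s).submatrix e c).det
      = (N.submatrix e c).det + (N.submatrix (fun q => if q = q₀ then r else e q) c).det := by
  have h1 : (addRow N r s).submatrix e c
      = (N.submatrix e c).updateRow q₀ (fun y => (fun y => N s (c y)) y + (fun y => N r (c y)) y) := by
    ext x y
    by_cases hx : x = q₀
    · subst hx
      rw [updateRow_self]
      simp [addRow, hq]
    · rw [updateRow_ne hx]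
      have : e x ≠ s := by rw [← hq]; exact fun h => hx (he h)
      simp [addRow, this]
  have h2 : (fun y => (fun y => N s (c y)) y + (fun y => N r (c y)) y)
      = ((fun y => N s (c y)) + (fun y => N r (c y))) := rfl
  rw [h1, h2, det_updateRow_add]
  congr 1
  · congr 1
    have : (fun y => N s (c y)) = (N.submatrix e c) q₀ := by
      ext y; simp [hq]
    rw [this, updateRow_eq_self]
  · congr 1
    ext x y
    by_cases hx : x = q₀
    · subst hx; rw [updateRow_self]; simp
    · rw [updateRow_ne hx]; simp [hx]

lemma addRow_submatrix_of_not_mem (e : Fin k → Fin K) (hs : ∀ q, e q ≠ s)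
    (c : Fin k → Fin J) : (addRow N r s).submatrix e c = N.submatrix e c := by
  ext x y; simp [addRow, hs x]

end Split

section Ranges
variable {k K : ℕ}

lemma redirect_injective (e : Fin k → Fin K) (he : Function.Injective e)
    (q₀ : Fin k) (r : Fin K) (hr : ∀ q, e q ≠ r) :
    Function.Injective (fun q => if q = q₀ then r else e q) := by
  intro a b hab
  simp only at hab
  split_ifs at hab with h1 h2 h2
  · rw [h1, h2]
  · exact absurd hab.symm (hr b)
  · exact absurd hab (hr a)
  · exact he hab

lemma mem_range_redirect (e : Fin k → Fin K) (he : Function.Injective e)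
    (q₀ : Fin k) (r : Fin K) (y : Fin K) :
    y ∈ Set.range (fun q => if q = q₀ then r else e q)
      ↔ (y = r ∨ (y ∈ Set.range e ∧ y ≠ e q₀)) := by
  constructor
  · rintro ⟨q, rfl⟩
    simp only
    split_ifs with h
    · exact Or.inl rfl
    · exact Or.inr ⟨Set.mem_range_self q, fun hh => h (he hh)⟩
  · rintro (rfl | ⟨⟨q, rfl⟩, hne⟩)
    · exact ⟨q₀, by simp⟩
    · exact ⟨q, by simp only; rw [if_neg (fun hh : q = q₀ => hne (by rw [hh]))]⟩

lemma range_skip2_s8 {m : ℕ} {i j : Fin (m+2)} (hij : i < j) :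
    Set.range (skip2 i j) = {y | y ≠ i ∧ y ≠ j} :=
  Set.ext fun y => skip2_mem_range hij y

lemma range_succAbove_comp {m : ℕ} (s : Fin (m+2)) (q : Fin (m+1)) :
    Set.range (s.succAbove ∘ q.succAbove) = {y | y ≠ s ∧ y ≠ s.succAbove q} := by
  ext y
  constructor
  · rintro ⟨t, rfl⟩
    exact ⟨Fin.succAbove_ne s _, fun h =>
      Fin.succAbove_ne q t (Fin.succAbove_right_injective h)⟩
  · rintro ⟨h1, h2⟩
    obtain ⟨u, hu⟩ := Fin.exists_succAbove_eq h1
    have hu' : u ≠ q := fun h => h2 (by rw [← hu, h])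
    obtain ⟨t, ht⟩ := Fin.exists_succAbove_eq hu'
    exact ⟨t, by simp only [Function.comp_apply, ht, hu]⟩

end Ranges

section Main
variable {m : ℕ}

def Bb (N : Matrix (Fin (m+2)) (Fin (m+1)) F2) : F2 :=
  ∑ c : Fin (m+1), ∑ i : Fin (m+2), ∑ j : Fin (m+2),
    if i < j then N i c * N j c * (N.submatrix (skip2 i j) c.succAbove).det else 0

def Dsum (N : Matrix (Fin (m+2)) (Fin (m+1)) F2) : F2 :=
  ∑ p : Fin (m+2), (N.submatrix p.succAbove id).det

lemma laplace (N : Matrix (Fin (m+2)) (Fin (m+1)) F2) (r s : Fin (m+2)) (hrs : r ≠ s) :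
    (N.submatrix s.succAbove id).det
      = ∑ k : Fin (m+1), N r k * (N.submatrix (skip2 (min s r) (max s r)) k.succAbove).det := by
  obtain ⟨q, hq⟩ := Fin.exists_succAbove_eq hrs
  rw [det_succ_row _ q]
  apply Finset.sum_congr rfl
  intro k _
  have h1 : ((-1 : F2))^((q:ℕ)+(k:ℕ)) = 1 := by rw [F2.neg_one, one_pow]
  rw [h1, one_mul, submatrix_apply, hq, submatrix_submatrix]
  congr 1
  have hid : (id ∘ k.succAbove : Fin m → Fin (m+1)) = k.succAbove := rfl
  rw [hid]
  apply det_rows_congr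
  · exact Fin.succAbove_right_injective.comp Fin.succAbove_right_injective
  · exact skip2_injective (min_lt_max.mpr hrs.symm)
  · rw [range_succAbove_comp, range_skip2_s8 (min_lt_max.mpr hrs.symm), hq]
    ext y
    simp only [Set.mem_setOf_eq]
    rcases le_total s r with h | h
    · rw [min_eq_left h, max_eq_right h]
    · rw [min_eq_right h, max_eq_left h]
      exact and_comm

lemma Dsum_addRow (N : Matrix (Fin (m+2)) (Fin (m+1)) F2) (r s : Fin (m+2)) (hrs : r ≠ s) :
    Dsum (addRow N r s) = Dsum N + (N.submatrix s.succAbove id).det := by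
  unfold Dsum
  have key : ∀ p : Fin (m+2), ((addRow N r s).submatrix p.succAbove id).det
      = (N.submatrix p.succAbove id).det
        + (if p = r then (N.submatrix s.succAbove id).det else 0) := by
    intro p
    by_cases hp : p = s
    · subst hp
      rw [addRow_submatrix_of_not_mem N r p p.succAbove (fun q => Fin.succAbove_ne p q) id]
      rw [if_neg (Ne.symm hrs), add_zero]
    · obtain ⟨q₀, hq₀⟩ := Fin.exists_succAbove_eq (Ne.symm hp)
      rw [det_addRow_split N r s _ Fin.succAbove_right_injective id q₀ hq₀]
      congr 1
      by_cases hpr : p = r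
      · subst hpr
        rw [if_pos rfl]
        apply det_rows_congr
        · exact redirect_injective _ Fin.succAbove_right_injective q₀ p
            (fun q => Fin.succAbove_ne p q)
        · exact Fin.succAbove_right_injective
        · ext y
          rw [mem_range_redirect _ Fin.succAbove_right_injective q₀ p, hq₀]
          simp only [Set.mem_range, Fin.exists_succAbove_eq_iff]
          constructor
          · rintro (rfl | ⟨_, hys⟩)
            · exact hrs
            · exact hys
          · intro hys
            by_cases hyp : y = p
            · exact Or.inl hyp
            · exact Or.inr ⟨hyp, hys⟩
      · rw [if_neg hpr]
        obtain ⟨q₁, hq₁⟩ := Fin.exists_succAbove_eq (Ne.symm hpr)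
        have hq01 : q₀ ≠ q₁ := by
          intro hh
          exact hrs (by rw [← hq₁, ← hh, hq₀])
        apply det_zero_of_row_eq hq01
        funext y
        simp [Ne.symm hq01, hq₁]
  rw [Finset.sum_congr rfl (fun p _ => key p), Finset.sum_add_distrib]
  congr 1
  rw [Finset.sum_ite_eq' Finset.univ r]
  simp

lemma ite_add_zero_split (P : Prop) [Decidable P] (a b : F2) :
    (if P then a + b else 0) = (if P then a else 0) + (if P then b else 0) := by
  split <;> simp

lemma double_ite_left {K : ℕ} (a : Fin K) (Q : Fin K → Prop) [DecidablePred Q]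
    (g : Fin K → F2) :
    (∑ i : Fin K, ∑ j : Fin K, if i < j then (if i = a ∧ Q j then g j else 0) else 0)
      = ∑ j : Fin K, if a < j ∧ Q j then g j else 0 := by
  have h : ∀ i : Fin K, (∑ j : Fin K, if i < j then (if i = a ∧ Q j then g j else 0) else 0)
      = if i = a then (∑ j : Fin K, if a < j ∧ Q j then g j else 0) else 0 := by
    intro i
    by_cases hi : i = a
    · subst hi
      rw [if_pos rfl]
      apply Finset.sum_congr rfl
      intro j _
      by_cases h1 : i < j <;> by_cases h2 : Q j <;> simp [h1, h2]
    · simp [hi]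
  rw [Finset.sum_congr rfl (fun i _ => h i), Finset.sum_ite_eq' Finset.univ a]
  simp

lemma double_ite_right {K : ℕ} (a : Fin K) (Q : Fin K → Prop) [DecidablePred Q]
    (g : Fin K → F2) :
    (∑ i : Fin K, ∑ j : Fin K, if i < j then (if j = a ∧ Q i then g i else 0) else 0)
      = ∑ i : Fin K, if i < a ∧ Q i then g i else 0 := by
  apply Finset.sum_congr rfl
  intro i _
  have h : ∀ j : Fin K, (if i < j then (if j = a ∧ Q i then g i else 0) else 0)
      = if j = a then (if i < a ∧ Q i then g i else 0) else 0 := by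
    intro j
    by_cases hj : j = a
    · subst hj
      by_cases h1 : i < j <;> by_cases h2 : Q i <;> simp [h1, h2]
    · simp [hj]
  rw [Finset.sum_congr rfl (fun j _ => h j), Finset.sum_ite_eq' Finset.univ a]
  simp

/-- abbreviation for the pair-minor with sorted indices -/
def Ee {m : ℕ} (N : Matrix (Fin (m+2)) (Fin (m+1)) F2) (r s : Fin (m+2))
    (k : Fin (m+1)) (o : Fin (m+2)) : F2 :=
  N r k * N o k * (N.submatrix (skip2 (min s o) (max s o)) k.succAbove).det

lemma Bb_addRow_key (N : Matrix (Fin (m+2)) (Fin (m+1)) F2) (r s : Fin (m+2)) (hrs : r ≠ s)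
    (k : Fin (m+1)) (i j : Fin (m+2)) (hij : i < j) :
    (addRow N r s) i k * (addRow N r s) j k
        * ((addRow N r s).submatrix (skip2 i j) k.succAbove).det
      = N i k * N j k * (N.submatrix (skip2 i j) k.succAbove).det
        + ((if i = s ∧ True then Ee N r s k j else 0)
          + ((if j = s ∧ True then Ee N r s k i else 0)
          + ((if i = r ∧ ¬ j = s then Ee N r s k j else 0)
          + (if j = r ∧ ¬ i = s then Ee N r s k i else 0)))) := by
  have hne_i : ∀ q, skip2 i j q ≠ i := fun q => ((skip2_mem_range hij _).mp ⟨q, rfl⟩).1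
  have hne_j : ∀ q, skip2 i j q ≠ j := fun q => ((skip2_mem_range hij _).mp ⟨q, rfl⟩).2
  have hrange : ∀ y, (∃ x, skip2 i j x = y) ↔ (y ≠ i ∧ y ≠ j) := skip2_mem_range hij
  by_cases his : i = s
  · subst his
    have hjs : ¬ j = i := hij.ne'
    rw [addRow_submatrix_of_not_mem N r i (skip2 i j) hne_i k.succAbove]
    have e1 : addRow N r i i k = N i k + N r k := by simp [addRow]
    have e2 : addRow N r i j k = N j k := by simp [addRow, hjs]
    rw [e1, e2, if_pos ⟨rfl, trivial⟩, if_neg (fun h => hjs h.1),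
      if_neg (fun h : i = r ∧ _ => hrs h.1.symm), if_neg (fun h => h.2 rfl)]
    unfold Ee
    rw [min_eq_left hij.le, max_eq_right hij.le]
    ring
  · by_cases hjs : j = s
    · subst hjs
      rw [addRow_submatrix_of_not_mem N r j (skip2 i j) hne_j k.succAbove]
      have e1 : addRow N r j i k = N i k := by simp [addRow, his]
      have e2 : addRow N r j j k = N j k + N r k := by simp [addRow]
      rw [e1, e2, if_neg (fun h => his h.1), if_pos ⟨rfl, trivial⟩,
        if_neg (fun h => h.2 rfl), if_neg (fun h : j = r ∧ _ => hrs h.1.symm)]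
      unfold Ee
      rw [min_eq_right hij.le, max_eq_left hij.le]
      ring
    · have e1 : addRow N r s i k = N i k := by simp [addRow, his]
      have e2 : addRow N r s j k = N j k := by simp [addRow, hjs]
      obtain ⟨q₀, hq₀⟩ := (skip2_mem_range hij s).mpr ⟨Ne.symm his, Ne.symm hjs⟩
      rw [e1, e2, det_addRow_split N r s _ (skip2_injective hij) k.succAbove q₀ hq₀]
      by_cases hir : i = r
      · subst hir
        have hd : (N.submatrix (fun q => if q = q₀ then i else skip2 i j q) k.succAbove).det
            = (N.submatrix (skip2 (min s j) (max s j)) k.succAbove).det := by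
          apply det_rows_congr
          · exact redirect_injective _ (skip2_injective hij) q₀ i (fun q => hne_i q)
          · exact skip2_injective (min_lt_max.mpr (Ne.symm hjs))
          · ext y
            rw [mem_range_redirect _ (skip2_injective hij) q₀ i, hq₀,
              range_skip2_s8 (min_lt_max.mpr (Ne.symm hjs))]
            have hmm : (y ≠ min s j ∧ y ≠ max s j) ↔ (y ≠ s ∧ y ≠ j) := by
              rcases le_total s j with h | h
              · rw [min_eq_left h, max_eq_right h]
              · rw [min_eq_right h, max_eq_left h]; exact and_comm
            simp only [Set.mem_range, Set.mem_setOf_eq, hmm, hrange]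
            constructor
            · rintro (rfl | ⟨⟨hyi, hyj⟩, hys⟩)
              · exact ⟨his, hij.ne⟩
              · exact ⟨hys, hyj⟩
            · rintro ⟨hys, hyj⟩
              by_cases hy : y = i
              · exact Or.inl hy
              · exact Or.inr ⟨⟨hy, hyj⟩, hys⟩
        rw [hd, if_neg (fun h => his h.1), if_neg (fun h => hjs h.1),
          if_pos ⟨rfl, hjs⟩, if_neg (fun h : j = i ∧ _ => hij.ne' h.1)]
        unfold Ee
        ring
      · by_cases hjr : j = r
        · subst hjr
          have hd : (N.submatrix (fun q => if q = q₀ then j else skip2 i j q) k.succAbove).det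
              = (N.submatrix (skip2 (min s i) (max s i)) k.succAbove).det := by
            apply det_rows_congr
            · exact redirect_injective _ (skip2_injective hij) q₀ j (fun q => hne_j q)
            · exact skip2_injective (min_lt_max.mpr (Ne.symm his))
            · ext y
              rw [mem_range_redirect _ (skip2_injective hij) q₀ j, hq₀,
                range_skip2_s8 (min_lt_max.mpr (Ne.symm his))]
              have hmm : (y ≠ min s i ∧ y ≠ max s i) ↔ (y ≠ s ∧ y ≠ i) := by
                rcases le_total s i with h | h
                · rw [min_eq_left h, max_eq_right h]
                · rw [min_eq_right h, max_eq_left h]; exact and_comm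
              simp only [Set.mem_range, Set.mem_setOf_eq, hmm, hrange]
              constructor
              · rintro (rfl | ⟨⟨hyi, hyj⟩, hys⟩)
                · exact ⟨hjs, hij.ne'⟩
                · exact ⟨hys, hyi⟩
              · rintro ⟨hys, hyi⟩
                by_cases hy : y = j
                · exact Or.inl hy
                · exact Or.inr ⟨⟨hyi, hy⟩, hys⟩
          rw [hd, if_neg (fun h => his h.1), if_neg (fun h => hjs h.1),
            if_neg (fun h : i = j ∧ _ => hij.ne h.1), if_pos ⟨rfl, his⟩]
          unfold Ee
          ring
        · obtain ⟨q₁, hq₁⟩ := (skip2_mem_range hij r).mpr ⟨Ne.symm hir, Ne.symm hjr⟩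
          have hq01 : q₀ ≠ q₁ := fun hh => hrs (by rw [← hq₁, ← hh, hq₀])
          have hd : (N.submatrix (fun q => if q = q₀ then r else skip2 i j q) k.succAbove).det
              = 0 := by
            apply det_zero_of_row_eq hq01
            funext y
            simp [Ne.symm hq01, hq₁]
          rw [hd, if_neg (fun h => his h.1), if_neg (fun h => hjs h.1),
            if_neg (fun h => hir h.1), if_neg (fun h => hjr h.1)]
          ring

lemma double_ite_left0 {K : ℕ} (a : Fin K) (g : Fin K → F2) :
    (∑ i : Fin K, ∑ j : Fin K, if i < j then (if i = a ∧ True then g j else 0) else 0)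
      = ∑ j : Fin K, if a < j then g j else 0 := by
  have := double_ite_left a (fun _ => True) g
  simpa using this

lemma double_ite_right0 {K : ℕ} (a : Fin K) (g : Fin K → F2) :
    (∑ i : Fin K, ∑ j : Fin K, if i < j then (if j = a ∧ True then g i else 0) else 0)
      = ∑ i : Fin K, if i < a then g i else 0 := by
  have := double_ite_right a (fun _ => True) g
  simpa using this

lemma Bb_addRow (N : Matrix (Fin (m+2)) (Fin (m+1)) F2) (r s : Fin (m+2)) (hrs : r ≠ s) :
    Bb (addRow N r s) = Bb N + (N.submatrix s.succAbove id).det := by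
  unfold Bb
  have step : ∀ k : Fin (m+1),
      (∑ i, ∑ j, if i < j then (addRow N r s) i k * (addRow N r s) j k
          * ((addRow N r s).submatrix (skip2 i j) k.succAbove).det else 0)
      = (∑ i, ∑ j, if i < j then N i k * N j k
          * (N.submatrix (skip2 i j) k.succAbove).det else 0) + Ee N r s k r := by
    intro k
    have h1 : ∀ i j : Fin (m+2),
        (if i < j then (addRow N r s) i k * (addRow N r s) j k
            * ((addRow N r s).submatrix (skip2 i j) k.succAbove).det else 0)
        = (if i < j then N i k * N j k * (N.submatrix (skip2 i j) k.succAbove).det else 0)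
          + ((if i < j then (if i = s ∧ True then Ee N r s k j else 0) else 0)
          + ((if i < j then (if j = s ∧ True then Ee N r s k i else 0) else 0)
          + ((if i < j then (if i = r ∧ ¬ j = s then Ee N r s k j else 0) else 0)
          + (if i < j then (if j = r ∧ ¬ i = s then Ee N r s k i else 0) else 0)))) := by
      intro i j
      by_cases hij : i < j
      · simp only [if_pos hij]
        exact Bb_addRow_key N r s hrs k i j hij
      · simp [hij]
    rw [Finset.sum_congr rfl (fun i _ => Finset.sum_congr rfl (fun j _ => h1 i j))]
    simp only [Finset.sum_add_distrib]
    congr 1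
    have hB := double_ite_left0 s (Ee N r s k)
    have hC := double_ite_right0 s (Ee N r s k)
    have hD := double_ite_left r (fun o => ¬ o = s) (Ee N r s k)
    have hE := double_ite_right r (fun o => ¬ o = s) (Ee N r s k)
    rw [hB, hC, hD, hE, ← Finset.sum_add_distrib, ← Finset.sum_add_distrib,
      ← Finset.sum_add_distrib]
    have h2 : ∀ o : Fin (m+2),
        ((if s < o then Ee N r s k o else 0)
        + ((if o < s then Ee N r s k o else 0)
        + ((if r < o ∧ ¬ o = s then Ee N r s k o else 0)
        + (if o < r ∧ ¬ o = s then Ee N r s k o else 0))))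
        = if o = r then Ee N r s k o else 0 := by
      intro o
      by_cases hor : o = r
      · subst hor
        rcases hrs.lt_or_gt with h | h
        · simp [lt_irrefl, h, h.asymm, Ne.symm hrs]
        · simp [lt_irrefl, h, h.asymm, Ne.symm hrs]
      · by_cases hos : o = s
        · subst hos
          simp [lt_irrefl, hor]
        · rcases (show o ≠ s from hos).lt_or_gt with h1 | h1 <;>
            rcases (show o ≠ r from hor).lt_or_gt with h2 | h2 <;>
            simp [h1, h2, h1.asymm, h2.asymm, hos, hor, F2.add_self]
    rw [Finset.sum_congr rfl (fun o _ => h2 o), Finset.sum_ite_eq' Finset.univ r]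
    simp
  rw [Finset.sum_congr rfl (fun k _ => step k), Finset.sum_add_distrib]
  congr 1
  rw [laplace N r s hrs]
  apply Finset.sum_congr rfl
  intro k _
  unfold Ee
  rw [F2.mul_self (N r k)]

lemma F_transvection (t : TransvectionStruct (Fin (m+2)) F2)
    (N : Matrix (Fin (m+2)) (Fin (m+1)) F2) :
    Bb (t.toMatrix * N) + Dsum (t.toMatrix * N) = Bb N + Dsum N := by
  obtain ⟨i, j, hij, c⟩ := t
  rw [TransvectionStruct.toMatrix_mk]
  have hc : c = 0 ∨ c = 1 := by revert c; decide
  rcases hc with rfl | rfl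
  · rw [transvection_zero, Matrix.one_mul]
  · have hmat : transvection i j (1 : F2) * N = addRow N j i := by
      ext p k
      rw [Matrix.mul_apply]
      have hterm : ∀ q, transvection i j (1:F2) p q * N q k
          = (if p = q then N q k else 0) + (if i = p ∧ j = q then N q k else 0) := by
        intro q
        simp only [transvection, Matrix.add_apply, Matrix.one_apply, Matrix.single,
          Matrix.of_apply, add_mul, ite_mul, zero_mul, one_mul]
      rw [Finset.sum_congr rfl (fun q _ => hterm q), Finset.sum_add_distrib,
        Finset.sum_ite_eq Finset.univ p (fun q => N q k)]
      have h2 : (∑ q, if i = p ∧ j = q then N q k else 0)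
          = if i = p then N j k else 0 := by
        by_cases hp : i = p
        · simp only [hp, true_and]
          rw [Finset.sum_ite_eq Finset.univ j (fun q => N q k)]
          simp
        · simp [hp]
      rw [h2]
      by_cases hp : p = i
      · subst hp
        simp [addRow]
      · simp [addRow, hp, Ne.symm hp]
    rw [hmat, Bb_addRow N j i (Ne.symm hij), Dsum_addRow N j i (Ne.symm hij)]
    have : ∀ a b d : F2, (a + d) + (b + d) = a + b := by decide
    exact this _ _ _

lemma F_mul (G : Matrix (Fin (m+2)) (Fin (m+2)) F2) (hG : IsUnit G.det) :
    ∀ N : Matrix (Fin (m+2)) (Fin (m+1)) F2,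
      Bb (G * N) + Dsum (G * N) = Bb N + Dsum N := by
  apply Matrix.diagonal_transvection_induction
    (P := fun G => ∀ N : Matrix (Fin (m+2)) (Fin (m+1)) F2,
      Bb (G * N) + Dsum (G * N) = Bb N + Dsum N)
  · intro D hD N
    have hD1 : ∀ p, D p = 1 := by
      intro p
      have h0 : det (diagonal D) ≠ 0 := by
        rw [hD]; exact hG.ne_zero
      rw [det_diagonal] at h0
      have := Finset.prod_ne_zero_iff.mp h0 p (Finset.mem_univ p)
      revert this
      generalize D p = x
      revert x; decide
    have : diagonal D = 1 := by
      ext a b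
      by_cases hab : a = b
      · subst hab; simp [hD1]
      · simp [diagonal_apply_ne _ hab, Matrix.one_apply_ne hab]
    rw [this, Matrix.one_mul]
  · intro t N
    exact F_transvection t N
  · intro A B hA hB N
    rw [Matrix.mul_assoc]
    rw [hA (B * N), hB N]

def Cmat (m : ℕ) : Matrix (Fin (m+2)) (Fin (m+1)) F2 :=
  Matrix.of fun i j => if (i : ℕ) = (j : ℕ) then 1 else 0

lemma mul_Cmat {I : Type*} [Fintype I] (X : Matrix I (Fin (m+2)) F2) :
    X * Cmat m = X.submatrix id Fin.castSucc := by
  ext a j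
  rw [Matrix.mul_apply]
  have hcond : ∀ q : Fin (m+2), ((q : ℕ) = (j : ℕ)) ↔ q = Fin.castSucc j := by
    intro q
    constructor
    · intro h; exact Fin.ext (by simpa using h)
    · intro h; subst h; simp
  have hterm : ∀ q : Fin (m+2), X a q * Cmat m q j
      = if q = Fin.castSucc j then X a q else 0 := by
    intro q
    simp only [Cmat, Matrix.of_apply, hcond, mul_ite, mul_one, mul_zero]
  rw [Finset.sum_congr rfl (fun q _ => hterm q), Finset.sum_ite_eq' Finset.univ _ (fun q => X a q)]
  simp

lemma Dsum_Cmat : Dsum (Cmat m) = 1 := by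
  unfold Dsum
  have key : ∀ p : Fin (m+2), ((Cmat m).submatrix p.succAbove id).det
      = if p = Fin.last (m+1) then 1 else 0 := by
    intro p
    by_cases hp : p = Fin.last (m+1)
    · subst hp
      rw [if_pos rfl]
      have : (Cmat m).submatrix (Fin.last (m+1)).succAbove id = 1 := by
        ext q j
        rw [Fin.succAbove_last]
        simp only [submatrix_apply, Cmat, Matrix.of_apply, id_eq, Fin.coe_castSucc,
          Matrix.one_apply]
        by_cases hqj : q = j
        · simp [hqj]
        · rw [if_neg (fun h => hqj (Fin.ext h)), if_neg hqj]
      rw [this, det_one]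
    · rw [if_neg hp]
      obtain ⟨q₁, hq₁⟩ := Fin.exists_succAbove_eq (Ne.symm hp)
      apply det_eq_zero_of_row_eq_zero q₁
      intro j
      simp only [submatrix_apply, hq₁, Cmat, Matrix.of_apply, id_eq]
      rw [if_neg]
      have := j.isLt
      simp only [Fin.val_last]
      omega
  rw [Finset.sum_congr rfl (fun p _ => key p), Finset.sum_ite_eq' Finset.univ _ (fun _ => (1 : F2))]
  simp

lemma Bb_Cmat : Bb (Cmat m) = 0 := by
  unfold Bb
  apply Finset.sum_eq_zero; intro k _
  apply Finset.sum_eq_zero; intro i _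
  apply Finset.sum_eq_zero; intro j _
  by_cases hij : i < j
  · rw [if_pos hij]
    by_cases hik : (i : ℕ) = (k : ℕ)
    · have hjk : ¬ ((j : ℕ) = (k : ℕ)) := by
        have : (i : ℕ) < (j : ℕ) := hij
        omega
      simp [Cmat, hjk]
    · simp [Cmat, hik]
  · rw [if_neg hij]

lemma exists_G (M : Matrix (Fin (m+2)) (Fin (m+1)) F2) (h : M.rank = m+1) :
    ∃ G : Matrix (Fin (m+2)) (Fin (m+2)) F2, IsUnit G.det ∧ G * Cmat m = M := by
  have hfr : Module.finrank F2 (Submodule.span F2 (Set.range Mᵀ)) = m + 1 := by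
    have := Matrix.rank_eq_finrank_span_cols M; rw [h] at this; exact this.symm
  have hspan : Submodule.span F2 (Set.range Mᵀ) ≠ ⊤ := by
    intro hT
    rw [hT, finrank_top, Module.finrank_fin_fun] at hfr
    omega
  obtain ⟨v, hv⟩ : ∃ v, v ∉ Submodule.span F2 (Set.range Mᵀ) := by
    by_contra hc
    push_neg at hc
    exact hspan (Submodule.eq_top_iff'.mpr hc)
  have hli : LinearIndependent F2 Mᵀ := by
    refine linearIndependent_iff_card_eq_finrank_span.mpr ?_
    rw [Fintype.card_fin]
    exact (hfr).symm
  have hli2 : LinearIndependent F2 (Fin.snoc Mᵀ v : Fin (m+2) → (Fin (m+2) → F2)) :=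
    linearIndependent_fin_snoc.mpr ⟨hli, hv⟩
  set G : Matrix (Fin (m+2)) (Fin (m+2)) F2 :=
    Matrix.of fun p q => (Fin.snoc Mᵀ v : Fin (m+2) → (Fin (m+2) → F2)) q p with hGdef
  refine ⟨G, ?_, ?_⟩
  · rw [← Matrix.isUnit_iff_isUnit_det, ← Matrix.linearIndependent_cols_iff_isUnit]
    have : (fun i => Gᵀ i) = (Fin.snoc Mᵀ v : Fin (m+2) → (Fin (m+2) → F2)) := by
      funext q p
      simp [hGdef, Matrix.transpose_apply]
    show LinearIndependent F2 (fun i => Gᵀ i); rw [this]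
    exact hli2
  · rw [mul_Cmat]
    ext p j
    simp only [submatrix_apply, id_eq, hGdef, Matrix.of_apply]
    erw [Fin.snoc_castSucc]
    rfl

lemma vecMul_Cmat (x : Fin (m+2) → F2) :
    Matrix.vecMul x (Cmat m) = fun j => x (Fin.castSucc j) := by
  funext j
  rw [Matrix.vecMul, dotProduct]
  have hterm : ∀ q : Fin (m+2), x q * (Cmat m) q j
      = if q = Fin.castSucc j then x q else 0 := by
    intro q
    have hcond : ((q : ℕ) = (j : ℕ)) ↔ q = Fin.castSucc j := by
      constructor
      · intro h; exact Fin.ext (by simpa using h)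
      · intro h; subst h; simp
    simp only [Cmat, Matrix.of_apply, hcond, mul_ite, mul_one, mul_zero]
  rw [Finset.sum_congr rfl (fun q _ => hterm q), Finset.sum_ite_eq' Finset.univ _ x]
  simp

lemma lam_eq_minor (G : Matrix (Fin (m+2)) (Fin (m+2)) F2) (hG : IsUnit G.det)
    (lam : Fin (m+2) → F2) (hlam : lam ≠ 0)
    (hrel : Matrix.vecMul lam (G * Cmat m) = 0) (p : Fin (m+2)) :
    lam p = ((G * Cmat m).submatrix p.succAbove id).det := by
  have hone : ∀ x : F2, x ≠ 0 → x = 1 := by decide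
  set μ := Matrix.vecMul lam G with hμ
  have hrel2 : Matrix.vecMul μ (Cmat m) = 0 := by
    rw [hμ, Matrix.vecMul_vecMul, hrel]
  have hcomp : ∀ j : Fin (m+1), μ (Fin.castSucc j) = 0 := by
    intro j
    have := congrFun hrel2 j
    rwa [vecMul_Cmat] at this
  have hlamμ : lam = Matrix.vecMul μ G⁻¹ := by
    rw [hμ, Matrix.vecMul_vecMul, Matrix.mul_nonsing_inv G hG, Matrix.vecMul_one]
  have hμne : μ (Fin.last (m+1)) ≠ 0 := by
    intro h0
    apply hlam
    have hμ0 : μ = 0 := funext fun q => Fin.lastCases h0 hcomp q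
    rw [hlamμ, hμ0, Matrix.zero_vecMul]
  have hμval : ∀ q, μ q = if q = Fin.last (m+1) then 1 else 0 := by
    intro q
    refine Fin.lastCases ?_ ?_ q
    · rw [if_pos rfl]
      exact hone _ hμne
    · intro i
      rw [hcomp i, if_neg (Fin.castSucc_lt_last i).ne]
  have hdet1 : G.det = 1 := hone _ hG.ne_zero
  have hGinv : G⁻¹ = G.adjugate := by
    rw [Matrix.inv_def, hdet1, Ring.inverse_one, one_smul]
  have hlamp : lam p = G.adjugate (Fin.last (m+1)) p := by
    rw [hlamμ, hGinv]
    have : ∀ q, μ q * G.adjugate q p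
        = if q = Fin.last (m+1) then G.adjugate q p else 0 := by
      intro q
      rw [hμval q]
      split_ifs <;> simp
    rw [show Matrix.vecMul μ G.adjugate p = ∑ q, μ q * G.adjugate q p from rfl,
      Finset.sum_congr rfl (fun q _ => this q),
      Finset.sum_ite_eq' Finset.univ _ (fun q => G.adjugate q p)]
    simp
  rw [hlamp, Matrix.adjugate_apply, det_succ_row _ p]
  have hterm : ∀ j : Fin (m+2),
      (-1 : F2) ^ ((p : ℕ) + (j : ℕ)) * (G.updateRow p (Pi.single (Fin.last (m+1)) 1)) p j
          * ((G.updateRow p (Pi.single (Fin.last (m+1)) 1)).submatrix p.succAbove j.succAbove).det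
      = if j = Fin.last (m+1) then (G.submatrix p.succAbove j.succAbove).det else 0 := by
    intro j
    rw [F2.neg_one, one_pow, one_mul, Matrix.updateRow_self]
    have hsub : (G.updateRow p (Pi.single (Fin.last (m+1)) 1)).submatrix p.succAbove j.succAbove
        = G.submatrix p.succAbove j.succAbove := by
      ext a b
      simp only [submatrix_apply]
      rw [Matrix.updateRow_ne (Fin.succAbove_ne p a)]
    rw [hsub, Pi.single_apply]
    split_ifs <;> simp
  rw [Finset.sum_congr rfl (fun j _ => hterm j)]
  have hcollapse := Finset.sum_ite_eq' (Finset.univ : Finset (Fin (m+2))) (Fin.last (m+1))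
    (fun j => (G.submatrix p.succAbove j.succAbove).det)
  simp only [Finset.mem_univ, if_true] at hcollapse
  rw [hcollapse, Fin.succAbove_last, mul_Cmat]
  rw [Matrix.submatrix_submatrix]
  rfl

end Main

section Main2
variable {m : ℕ}

lemma Bcoef_cast' (A : Matrix (Fin (m+2)) (Fin (m+1)) ℤ) :
    ((Bcoef A : ℤ) : F2) = Bb (A.map (fun x : ℤ => (x : F2))) := by
  unfold Bcoef Bb
  push_cast
  apply Finset.sum_congr rfl; intro k _
  apply Finset.sum_congr rfl; intro i _
  apply Finset.sum_congr rfl; intro j _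
  by_cases hij : i < j
  · rw [if_pos hij, if_pos hij]
    have h1 : (A.map (fun x : ℤ => (x : F2))) i k = ((A i k : ℤ) : F2) := rfl
    have h2 : (A.map (fun x : ℤ => (x : F2))) j k = ((A j k : ℤ) : F2) := rfl
    rw [h1, h2]
    congr 1
  · rw [if_neg hij, if_neg hij]

/-- If the reduction `Ā` of `A` modulo `2` has full rank `n` over `𝔽₂ = ℤ/2ℤ`, then for
any nonzero `λ = (λ₀,…,λₙ) ∈ 𝔽₂ⁿ⁺¹` with `λ₀ā₀ + ⋯ + λₙāₙ = 0` one has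
`B(A) ≡ λ₀ + ⋯ + λₙ + 1 (mod 2)`. -/
theorem Bcoef_of_rank_eq {m : ℕ} (A : Matrix (Fin (m + 2)) (Fin (m + 1)) ℤ)
    (h : (A.map (fun x : ℤ => (x : ZMod 2))).rank = m + 1)
    (lam : Fin (m + 2) → ZMod 2) (hlam : lam ≠ 0)
    (hrel : Matrix.vecMul lam (A.map (fun x : ℤ => (x : ZMod 2))) = 0) :
    (Bcoef A : ZMod 2) = ∑ i, lam i + 1 := by
  set M : Matrix (Fin (m+2)) (Fin (m+1)) F2 := A.map (fun x : ℤ => (x : F2)) with hM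
  obtain ⟨G, hG, hGC⟩ := exists_G M h
  have hF := F_mul G hG (Cmat m)
  rw [hGC, Bb_Cmat, Dsum_Cmat, zero_add] at hF
  have hlam2 : ∀ p, lam p = (M.submatrix p.succAbove id).det := by
    intro p
    have := lam_eq_minor G hG lam hlam (by rw [hGC]; exact hrel) p
    rwa [hGC] at this
  have hsum : ∑ i, lam i = Dsum M :=
    Finset.sum_congr rfl (fun p _ => hlam2 p)
  rw [Bcoef_cast' A, hsum]
  have : ∀ a b : F2, a + b = 1 → a = b + 1 := by decide
  exact this _ _ hF
end Main2
end
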